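/- Let M > 0 and let π and ρ be probability measures on ℝ, each giving full mass to the set {x : |x| ≤ √M}, and suppose ε = KL(π‖ρ) < ∞. Then the standard deviations satisfy |Std(π) − Std(ρ)| ≤ √(4M·√ε), i.e. |Std(π) − Std(ρ)| ≤ 2·√M·ε^{1/4}. -/

import Mathlib

/-! Write `r = dπ/dρ`. The pointwise bound `(√r - 1)² ≤ r log r + 1 - r` controls the squared
Hellinger distance by `ε`, and Cauchy–Schwarz applied to `|r - 1| = |√r - 1| (√r + 1)` gives
`∫ |r - 1| dρ ≤ 2√ε`. On the support, `(x - c)²` takes values in `[0, 4M]` whenever `|c| ≤ √M`,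
so its `π`- and `ρ`-integrals differ by at most `2M ∫ |r - 1| dρ`. Taking `c` to be the mean of
`ρ`, resp. of `π`, compares the two variances, and `|√a - √b| ≤ √|a - b|` passes to the standard
deviations. -/

open MeasureTheory
open scoped Classical

/-- Kullback–Leibler divergence `KL(μ‖ν)`, valued in `EReal`:
`∫ log (dμ/dν) dμ` when `μ ≪ ν` and the integrand is `μ`-integrable, `⊤` otherwise. -/
noncomputable def klDiv {Ω : Type*} [MeasurableSpace Ω] (μ ν : Measure Ω) : EReal :=
  if μ ≪ ν ∧ Integrable (fun ω => Real.log (μ.rnDeriv ν ω).toReal) μ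
  then ((∫ ω, Real.log (μ.rnDeriv ν ω).toReal ∂μ : ℝ) : EReal)
  else ⊤

/-- Mean of a measure on `ℝ`. -/
noncomputable def meanM (μ : Measure ℝ) : ℝ := ∫ x, x ∂μ

/-- Variance of a measure on `ℝ`: `∫ x² dμ − (∫ x dμ)²`. -/
noncomputable def varM (μ : Measure ℝ) : ℝ := (∫ x, x ^ 2 ∂μ) - (∫ x, x ∂μ) ^ 2

/-- Standard deviation of a measure on `ℝ`. -/
noncomputable def stdM (μ : Measure ℝ) : ℝ := Real.sqrt (varM μ)

open ProbabilityTheory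
open InformationTheory (klFun klFun_nonneg integrable_klFun_rnDeriv_iff integral_klFun_rnDeriv)

section

open Real

lemma abs_sqrt_sub_sqrt_le_sqrt_abs_sub {a b : ℝ} (ha : 0 ≤ a) (hb : 0 ≤ b) :
    |√a - √b| ≤ √|a - b| := by
  refine abs_le_sqrt ?_
  have hprod : (√a - √b) * (√a + √b) = a - b := by
    ring_nf; rw [sq_sqrt ha, sq_sqrt hb]
  calc (√a - √b) ^ 2 = |√a - √b| * |√a - √b| := by rw [abs_mul_abs_self, sq]
    _ ≤ |√a - √b| * (√a + √b) := by
        gcongr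
        exact abs_sub_le_iff.2 ⟨by linarith [sqrt_nonneg b], by linarith [sqrt_nonneg a]⟩
    _ = |a - b| := by rw [← hprod, abs_mul, abs_of_nonneg (by positivity : 0 ≤ √a + √b)]

namespace InformationTheory

lemma klFun_sq (u : ℝ) : klFun (u ^ 2) = (u - 1) ^ 2 + 2 * u * klFun u := by
  simp only [klFun, log_pow, Nat.cast_ofNat]
  ring

lemma sq_sqrt_sub_one_le_klFun {x : ℝ} (hx : 0 ≤ x) : (√x - 1) ^ 2 ≤ klFun x :=
  calc (√x - 1) ^ 2 ≤ (√x - 1) ^ 2 + 2 * √x * klFun √x :=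
        le_add_of_nonneg_right (mul_nonneg (by positivity) (klFun_nonneg (sqrt_nonneg x)))
    _ = klFun x := by rw [← klFun_sq, sq_sqrt hx]

end InformationTheory

variable {Ω : Type*} [MeasurableSpace Ω] {μ ν : Measure Ω}

lemma integral_mul_le_sqrt_integral_sq_mul_sqrt_integral_sq {f g : Ω → ℝ}
    (hf₀ : 0 ≤ᵐ[μ] f) (hg₀ : 0 ≤ᵐ[μ] g) (hf : MemLp f 2 μ) (hg : MemLp g 2 μ) :
    ∫ x, f x * g x ∂μ ≤ √(∫ x, f x ^ 2 ∂μ) * √(∫ x, g x ^ 2 ∂μ) := by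
  have := integral_mul_le_Lp_mul_Lq_of_nonneg Real.HolderConjugate.two_two hf₀ hg₀
    (by simpa using hf) (by simpa using hg)
  rw [sqrt_eq_rpow, sqrt_eq_rpow]
  simpa only [rpow_two] using this

lemma integral_abs_sub_one_le_two_sqrt_integral_klFun [IsProbabilityMeasure μ] {r : Ω → ℝ}
    (hr₀ : ∀ x, 0 ≤ r x) (hr : Integrable r μ) (hr₁ : ∫ x, r x ∂μ = 1)
    (hkl : Integrable (fun x => klFun (r x)) μ) :
    ∫ x, |r x - 1| ∂μ ≤ 2 * √(∫ x, klFun (r x) ∂μ) := by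
  set u : Ω → ℝ := fun x => √(r x)
  have hu : AEStronglyMeasurable u μ := hr.aemeasurable.sqrt.aestronglyMeasurable
  have hu₀ : ∀ x, 0 ≤ u x := fun x => sqrt_nonneg _
  have hu_sq : ∀ x, u x ^ 2 = r x := fun x => sq_sqrt (hr₀ x)
  have hminus_le : ∀ x, |u x - 1| ^ 2 ≤ klFun (r x) := fun x =>
    (sq_abs _).trans_le (InformationTheory.sq_sqrt_sub_one_le_klFun (hr₀ x))
  have hplus_le : ∀ x, (u x + 1) ^ 2 ≤ 2 * r x + 2 := fun x => by
    nlinarith [hu_sq x, sq_nonneg (u x - 1)]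
  have hminus : MemLp (fun x => |u x - 1|) 2 μ := by
    have hu_sub : AEStronglyMeasurable (fun x => |u x - 1|) μ :=
      (hu.sub aestronglyMeasurable_const).norm
    refine (memLp_two_iff_integrable_sq hu_sub).2 (hkl.mono' (hu_sub.pow 2) ?_)
    exact .of_forall fun x => by
      rw [norm_of_nonneg (sq_nonneg _)]; exact hminus_le x
  have hplus_int : Integrable (fun x => 2 * r x + 2) μ := (hr.const_mul 2).add (integrable_const 2)
  have hplus : MemLp (fun x => u x + 1) 2 μ := by
    refine (memLp_two_iff_integrable_sq (hu.add_const 1)).2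
      (hplus_int.mono' ((hu.add_const 1).pow 2) ?_)
    exact .of_forall fun x => by
      rw [norm_of_nonneg (sq_nonneg _)]; exact hplus_le x
  have hfactor : ∀ x, |r x - 1| = |u x - 1| * (u x + 1) := fun x => by
    rw [← hu_sq x, ← abs_of_nonneg (add_nonneg (hu₀ x) zero_le_one), ← abs_mul]
    ring_nf
  calc ∫ x, |r x - 1| ∂μ = ∫ x, |u x - 1| * (u x + 1) ∂μ := by simp only [hfactor]
    _ ≤ √(∫ x, |u x - 1| ^ 2 ∂μ) * √(∫ x, (u x + 1) ^ 2 ∂μ) :=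
        integral_mul_le_sqrt_integral_sq_mul_sqrt_integral_sq
          (.of_forall fun x => abs_nonneg _) (.of_forall fun x => add_nonneg (hu₀ x) zero_le_one)
          hminus hplus
    _ ≤ √(∫ x, klFun (r x) ∂μ) * √(∫ x, (2 * r x + 2) ∂μ) := by
        gcongr √?_ * √?_
        · exact integral_mono hminus.integrable_sq hkl hminus_le
        · exact integral_mono hplus.integrable_sq hplus_int hplus_le
    _ = 2 * √(∫ x, klFun (r x) ∂μ) := by
        rw [integral_add (hr.const_mul 2) (integrable_const 2), integral_const_mul, hr₁]
        norm_num
        ring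

lemma abs_integral_sub_integral_le_of_abs_sub_le [IsProbabilityMeasure μ] [IsProbabilityMeasure ν]
    (hμν : μ ≪ ν) {f : Ω → ℝ} {c C : ℝ} (hf : AEStronglyMeasurable f ν)
    (hfc : ∀ᵐ x ∂ν, |f x - c| ≤ C) :
    |∫ x, f x ∂μ - ∫ x, f x ∂ν| ≤ C * ∫ x, |(μ.rnDeriv ν x).toReal - 1| ∂ν := by
  set r : Ω → ℝ := fun x => (μ.rnDeriv ν x).toReal
  have hg : AEStronglyMeasurable (fun x => f x - c) ν := hf.sub aestronglyMeasurable_const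
  have hg_ν : Integrable (fun x => f x - c) ν := .of_bound hg C hfc
  have hg_μ : Integrable (fun x => f x - c) μ := .of_bound (hg.mono_ac hμν) C (hμν.ae_le hfc)
  have hf_ν : Integrable f ν :=
    integrable_add_const_iff.1 (by simpa only [sub_eq_add_neg] using hg_ν)
  have hf_μ : Integrable f μ :=
    integrable_add_const_iff.1 (by simpa only [sub_eq_add_neg] using hg_μ)
  have hrg : Integrable (fun x => r x * (f x - c)) ν := (integrable_rnDeriv_smul_iff hμν).2 hg_μ
  have hrg_eq : ∫ x, r x * (f x - c) ∂ν = ∫ x, f x - c ∂μ := integral_rnDeriv_smul hμν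
  have hr_sub : Integrable (fun x => r x - 1) ν :=
    Measure.integrable_toReal_rnDeriv.sub (integrable_const 1)
  calc |∫ x, f x ∂μ - ∫ x, f x ∂ν| = |∫ x, (r x - 1) * (f x - c) ∂ν| := by
        simp_rw [sub_one_mul]
        rw [integral_sub hrg hg_ν, hrg_eq, integral_sub hf_μ (integrable_const c),
          integral_sub hf_ν (integrable_const c)]
        simp
    _ ≤ ∫ x, |r x - 1| * |f x - c| ∂ν := by
        simpa only [abs_mul] using
          abs_integral_le_integral_abs (f := fun x => (r x - 1) * (f x - c)) (μ := ν)
    _ ≤ ∫ x, |r x - 1| * C ∂ν := by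
        refine integral_mono_of_nonneg (.of_forall fun x => by positivity)
          (hr_sub.abs.mul_const C) ?_
        filter_upwards [hfc] with x hx
        exact mul_le_mul_of_nonneg_left hx (abs_nonneg _)
    _ = C * ∫ x, |r x - 1| ∂ν := by rw [integral_mul_const, mul_comm]

lemma klDiv_eq_coe_iff {ε : ℝ} :
    klDiv μ ν = ε ↔ μ ≪ ν ∧ Integrable (llr μ ν) μ ∧ ∫ x, llr μ ν x ∂μ = ε := by
  rw [klDiv, llr_def]
  split_ifs with h
  · simp [h]
  · simp only [EReal.top_ne_coe, false_iff]
    tauto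

lemma integral_abs_toReal_rnDeriv_sub_one_le_of_klDiv_eq [IsProbabilityMeasure μ]
    [IsProbabilityMeasure ν] {ε : ℝ} (h : klDiv μ ν = ε) :
    ∫ x, |(μ.rnDeriv ν x).toReal - 1| ∂ν ≤ 2 * √ε := by
  obtain ⟨hμν, h_int, rfl⟩ := klDiv_eq_coe_iff.1 h
  have := integral_abs_sub_one_le_two_sqrt_integral_klFun (fun x => ENNReal.toReal_nonneg)
    Measure.integrable_toReal_rnDeriv (by simp [Measure.integral_toReal_rnDeriv hμν])
    ((integrable_klFun_rnDeriv_iff hμν).2 h_int)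
  simpa [integral_klFun_rnDeriv hμν h_int] using this

lemma variance_le_integral_sub_sq [IsProbabilityMeasure μ] {X : Ω → ℝ}
    (hX : AEStronglyMeasurable X μ) (c : ℝ) : Var[X; μ] ≤ ∫ x, (X x - c) ^ 2 ∂μ := by
  rw [← variance_sub_const hX c]
  exact variance_le_expectation_sq (hX.sub aestronglyMeasurable_const)

lemma abs_variance_sub_variance_le [IsProbabilityMeasure μ] [IsProbabilityMeasure ν] (hμν : μ ≪ ν)
    {X : Ω → ℝ} {s : ℝ} (hX : AEStronglyMeasurable X ν) (hXs : ∀ᵐ x ∂ν, |X x| ≤ s) :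
    |Var[X; μ] - Var[X; ν]| ≤ 2 * s ^ 2 * ∫ x, |(μ.rnDeriv ν x).toReal - 1| ∂ν := by
  have hX_μ : AEStronglyMeasurable X μ := hX.mono_ac hμν
  have abs_mean_le {m : Measure Ω} [IsProbabilityMeasure m] (h : ∀ᵐ x ∂m, |X x| ≤ s) :
      |m[X]| ≤ s := by
    simpa using norm_integral_le_of_norm_le_const (μ := m) (f := X)
      (by simpa only [norm_eq_abs] using h)
  -- On the support `0 ≤ (X - c) ^ 2 ≤ 4 s ^ 2`, hence the centering at `2 s ^ 2`.
  have transfer {c : ℝ} (hc : |c| ≤ s) :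
      |∫ x, (X x - c) ^ 2 ∂μ - ∫ x, (X x - c) ^ 2 ∂ν| ≤
        2 * s ^ 2 * ∫ x, |(μ.rnDeriv ν x).toReal - 1| ∂ν := by
    refine abs_integral_sub_integral_le_of_abs_sub_le hμν
      ((hX.sub aestronglyMeasurable_const).pow 2) (c := 2 * s ^ 2) ?_
    filter_upwards [hXs] with x hx
    obtain ⟨hx₁, hx₂⟩ := abs_le.1 hx
    obtain ⟨hc₁, hc₂⟩ := abs_le.1 hc
    rw [abs_le]
    constructor <;> nlinarith [mul_nonneg (by linarith : 0 ≤ 2 * s - (X x - c))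
      (by linarith : 0 ≤ 2 * s + (X x - c))]
  rw [abs_sub_le_iff]
  constructor
  · calc Var[X; μ] - Var[X; ν]
        ≤ ∫ x, (X x - ν[X]) ^ 2 ∂μ - ∫ x, (X x - ν[X]) ^ 2 ∂ν := by
          rw [variance_eq_integral hX.aemeasurable]
          exact sub_le_sub_right (variance_le_integral_sub_sq hX_μ _) _
      _ ≤ _ := (abs_sub_le_iff.1 (transfer (abs_mean_le hXs))).1
  · calc Var[X; ν] - Var[X; μ]
        ≤ ∫ x, (X x - μ[X]) ^ 2 ∂ν - ∫ x, (X x - μ[X]) ^ 2 ∂μ := by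
          rw [variance_eq_integral hX_μ.aemeasurable]
          exact sub_le_sub_right (variance_le_integral_sub_sq hX _) _
      _ ≤ _ := (abs_sub_le_iff.1 (transfer (abs_mean_le (hμν.ae_le hXs)))).2

end

lemma varM_eq_variance {μ : Measure ℝ} [IsProbabilityMeasure μ] (h : MemLp id 2 μ) :
    varM μ = Var[id; μ] := by
  simp [variance_eq_sub h, varM]

theorem std_gap_le_of_klDiv_eq_general (M : ℝ) (hM : 0 < M) (π ρ : Measure ℝ)
    [IsProbabilityMeasure π] [IsProbabilityMeasure ρ]
    (hρ : ρ {x : ℝ | |x| ≤ Real.sqrt M} = 1)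
    (ε : ℝ) (hε : klDiv π ρ = (ε : EReal)) :
    |stdM π - stdM ρ| ≤ Real.sqrt (4 * M * Real.sqrt ε) := by
  have hπρ : π ≪ ρ := (klDiv_eq_coe_iff.1 hε).1
  have hρ_ae : ∀ᵐ x ∂ρ, |x| ≤ √M := by
    refine (ae_iff_measure_eq ?_).2 (by rw [hρ, measure_univ])
    exact (measurableSet_le continuous_abs.measurable measurable_const).nullMeasurableSet
  have hπ_ae : ∀ᵐ x ∂π, |x| ≤ √M := hπρ.ae_le hρ_ae
  have hvar := abs_variance_sub_variance_le hπρ aestronglyMeasurable_id hρ_ae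
  have htv := integral_abs_toReal_rnDeriv_sub_one_le_of_klDiv_eq hε
  rw [stdM, stdM, varM_eq_variance (.of_bound aestronglyMeasurable_id _ hπ_ae),
    varM_eq_variance (.of_bound aestronglyMeasurable_id _ hρ_ae)]
  calc |√Var[id; π] - √Var[id; ρ]| ≤ √|Var[id; π] - Var[id; ρ]| :=
        abs_sqrt_sub_sqrt_le_sqrt_abs_sub (variance_nonneg _ _) (variance_nonneg _ _)
    _ ≤ √(4 * M * √ε) := by
        refine Real.sqrt_le_sqrt (hvar.trans ?_)
        rw [Real.sq_sqrt hM.le]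
        exact (mul_le_mul_of_nonneg_left htv (by positivity)).trans_eq (by ring)

/-- If `π` and `ρ` are probability measures on `ℝ` supported in `{x : |x| ≤ √M}` with
`KL(π‖ρ) = ε < ∞`, then `|Std(π) − Std(ρ)| ≤ √(4M√ε)`. -/
theorem std_gap_le_of_klDiv_eq (M : ℝ) (hM : 0 < M) (π ρ : Measure ℝ)
    [IsProbabilityMeasure π] [IsProbabilityMeasure ρ]
    (hπ : π {x : ℝ | |x| ≤ Real.sqrt M} = 1)
    (hρ : ρ {x : ℝ | |x| ≤ Real.sqrt M} = 1)
    (ε : ℝ) (hε : klDiv π ρ = (ε : EReal)) :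
    |stdM π - stdM ρ| ≤ Real.sqrt (4 * M * Real.sqrt ε) :=
  std_gap_le_of_klDiv_eq_general M hM π ρ hρ ε hε
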